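/- The number of partitions of [n] that are simultaneously noncrossing and nonnesting equals the Fibonacci number f_{2n−1} for all n ≥ 1, where f_1 = f_2 = 1 and f_{m+2} = f_{m+1} + f_m; equivalently, the generating function Σ_{n≥0} NCN_{2,2}(n,1) x^n equals (1−2x)/(1−3x+x²). -/

import Mathlib

open Finset

/-- `IsArc P i j` : `(i,j)` is an arc of the set partition `P`. -/
def IsArc {n : ℕ} (P : Finpartition (Finset.univ : Finset (Fin n))) (i j : Fin n) : Prop :=
  i < j ∧ ∃ B ∈ P.parts, i ∈ B ∧ j ∈ B ∧ ∀ k ∈ B, i < k → j ≤ k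

/-- The set of minimal elements of blocks of `P`. -/
def blockMin {n : ℕ} (P : Finpartition (Finset.univ : Finset (Fin n))) : Set (Fin n) :=
  {i | ∃ B ∈ P.parts, i ∈ B ∧ ∀ k ∈ B, i ≤ k}

/-- The set of maximal elements of blocks of `P`. -/
def blockMax {n : ℕ} (P : Finpartition (Finset.univ : Finset (Fin n))) : Set (Fin n) :=
  {i | ∃ B ∈ P.parts, i ∈ B ∧ ∀ k ∈ B, k ≤ i}

/-- An `r`-colored partition of `[n]`. -/
structure ColoredPartition (n r : ℕ) where
  P : Finpartition (Finset.univ : Finset (Fin n))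
  color : ∀ i j : Fin n, IsArc P i j → Fin r

/-- `Λ` has a `k`-crossing: `k` same-colored arcs with
`i₁ < ⋯ < i_k < j₁ < ⋯ < j_k`. -/
def HasCrossing {n r : ℕ} (Λ : ColoredPartition n r) (k : ℕ) : Prop :=
  ∃ (f g : Fin k → Fin n) (c : Fin r),
    StrictMono f ∧ StrictMono g ∧ (∀ s t : Fin k, f s < g t) ∧
    ∀ t, ∃ h : IsArc Λ.P (f t) (g t), Λ.color (f t) (g t) h = c

/-- `Λ` has a `k`-nesting: `k` same-colored arcs with
`i₁ < ⋯ < i_k < j_k < ⋯ < j₁`. -/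
def HasNesting {n r : ℕ} (Λ : ColoredPartition n r) (k : ℕ) : Prop :=
  ∃ (f g : Fin k → Fin n) (c : Fin r),
    StrictMono f ∧ StrictAnti g ∧ (∀ s t : Fin k, f s < g t) ∧
    ∀ t, ∃ h : IsArc Λ.P (f t) (g t), Λ.color (f t) (g t) h = c

/-- Uncolored `k`-crossing. -/
def HasCrossingP {n : ℕ} (P : Finpartition (Finset.univ : Finset (Fin n))) (k : ℕ) : Prop :=
  ∃ f g : Fin k → Fin n, StrictMono f ∧ StrictMono g ∧ (∀ s t : Fin k, f s < g t) ∧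
    ∀ t, IsArc P (f t) (g t)

/-- Uncolored `k`-nesting. -/
def HasNestingP {n : ℕ} (P : Finpartition (Finset.univ : Finset (Fin n))) (k : ℕ) : Prop :=
  ∃ f g : Fin k → Fin n, StrictMono f ∧ StrictAnti g ∧ (∀ s t : Fin k, f s < g t) ∧
    ∀ t, IsArc P (f t) (g t)

/-- The crossing number of a colored partition: the largest `k` with a `k`-crossing. -/
noncomputable def crNum {n r : ℕ} (Λ : ColoredPartition n r) : ℕ :=
  sSup {k | 0 < k ∧ HasCrossing Λ k}

noncomputable def neNum {n r : ℕ} (Λ : ColoredPartition n r) : ℕ :=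
  sSup {k | 0 < k ∧ HasNesting Λ k}

noncomputable def crNumP {n : ℕ} (P : Finpartition (Finset.univ : Finset (Fin n))) : ℕ :=
  sSup {k | 0 < k ∧ HasCrossingP P k}

noncomputable def neNumP {n : ℕ} (P : Finpartition (Finset.univ : Finset (Fin n))) : ℕ :=
  sSup {k | 0 < k ∧ HasNestingP P k}

/-- A matching: all blocks have at most two elements. -/
def IsMatching {m : ℕ} (P : Finpartition (Finset.univ : Finset (Fin m))) : Prop :=
  ∀ B ∈ P.parts, B.card ≤ 2

/-- A complete matching: all blocks have exactly two elements. -/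
def IsCompleteMatching {m : ℕ} (P : Finpartition (Finset.univ : Finset (Fin m))) : Prop :=
  ∀ B ∈ P.parts, B.card = 2

/-- `i ∈ [n] ↦ 2i ∈ [2n]` (0-based: the element of 1-based value `2(i+1)-1`). -/
def dbl {n : ℕ} (i : Fin n) : Fin (2 * n) := ⟨2 * i.1, by have := i.2; omega⟩

/-- `i ∈ [n] ↦` 0-based index `2i+1` of `[2n]` (1-based value `2(i+1)`). -/
def dbl1 {n : ℕ} (i : Fin n) : Fin (2 * n) := ⟨2 * i.1 + 1, by have := i.2; omega⟩

/-- Enhanced arcs: arcs of `P` together with loops `(i,i)` at isolated points. -/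
def EnhIsArc {n : ℕ} (P : Finpartition (Finset.univ : Finset (Fin n))) (i j : Fin n) : Prop :=
  IsArc P i j ∨ (i = j ∧ i ∈ blockMin P ∧ i ∈ blockMax P)

/-- An `r`-colored enhanced partition of `[n]`. -/
structure EnhColoredPartition (n r : ℕ) where
  P : Finpartition (Finset.univ : Finset (Fin n))
  color : ∀ i j : Fin n, EnhIsArc P i j → Fin r

/-- Enhanced `k`-crossing: same-colored enhanced arcs with
`i₁ < ⋯ < i_k ≤ j₁ < ⋯ < j_k`. -/
def HasEnhCrossing {n r : ℕ} (Λ : EnhColoredPartition n r) (k : ℕ) : Prop :=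
  ∃ (f g : Fin k → Fin n) (c : Fin r),
    StrictMono f ∧ StrictMono g ∧ (∀ s t : Fin k, f s ≤ g t) ∧
    ∀ t, ∃ h : EnhIsArc Λ.P (f t) (g t), Λ.color (f t) (g t) h = c

/-- Enhanced `k`-nesting: same-colored enhanced arcs with
`i₁ < ⋯ < i_k ≤ j_k < ⋯ < j₁`. -/
def HasEnhNesting {n r : ℕ} (Λ : EnhColoredPartition n r) (k : ℕ) : Prop :=
  ∃ (f g : Fin k → Fin n) (c : Fin r),
    StrictMono f ∧ StrictAnti g ∧ (∀ s t : Fin k, f s ≤ g t) ∧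
    ∀ t, ∃ h : EnhIsArc Λ.P (f t) (g t), Λ.color (f t) (g t) h = c

noncomputable def enhCrNum {n r : ℕ} (Λ : EnhColoredPartition n r) : ℕ :=
  sSup {k | 0 < k ∧ HasEnhCrossing Λ k}

noncomputable def enhNeNum {n r : ℕ} (Λ : EnhColoredPartition n r) : ℕ :=
  sSup {k | 0 < k ∧ HasEnhNesting Λ k}

/-- The `(r+1)²` steps: `±e_i` (first summand with a sign), `e_i − e_j` for `i ≠ j`,
and `r+1` distinct zero steps. -/
def Step (r : ℕ) : Type :=
  (Fin r × Bool) ⊕ ({p : Fin r × Fin r // p.1 ≠ p.2} ⊕ Fin (r + 1))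

/-- The displacement vector of a step. -/
def stepVec {r : ℕ} : Step r → Fin r → ℤ
  | Sum.inl (i, b) => fun t => if t = i then (if b then 1 else -1) else 0
  | Sum.inr (Sum.inl p) => fun t => (if t = p.1.1 then 1 else 0) - (if t = p.1.2 then 1 else 0)
  | Sum.inr (Sum.inr _) => fun _ => 0

/-- Position after the first `k` steps of a walk started at the origin. -/
def walkPos {r m : ℕ} (w : Fin m → Step r) (k : ℕ) (t : Fin r) : ℤ :=
  ∑ i ∈ Finset.univ.filter (fun i : Fin m => i.1 < k), stepVec (w i) t

/-- The walk stays in `ℕ^r` throughout and returns to the origin. -/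
def IsClosedWalk {r m : ℕ} (w : Fin m → Step r) : Prop :=
  (∀ k : ℕ, ∀ t : Fin r, 0 ≤ walkPos w k t) ∧ ∀ t : Fin r, walkPos w m t = 0

/-- An `r`-colored permutation of `[n]`. -/
structure ColoredPerm (n r : ℕ) where
  sigma : Equiv.Perm (Fin n)
  cplus : ∀ i : Fin n, i ≤ sigma i → Fin r
  cminus : ∀ i : Fin n, sigma i < i → Fin r

/-- `k`-crossing of a colored permutation: an enhanced `k`-crossing among same-colored
upper arcs `(i, σ i)`, or an ordinary `k`-crossing among same-colored lower arcs `(σ i, i)`. -/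
def PermHasCrossing {n r : ℕ} (S : ColoredPerm n r) (k : ℕ) : Prop :=
  (∃ (f : Fin k → Fin n) (c : Fin r),
      StrictMono f ∧ StrictMono (fun t => S.sigma (f t)) ∧
      (∀ s t : Fin k, f s ≤ S.sigma (f t)) ∧
      ∀ t, ∃ h : f t ≤ S.sigma (f t), S.cplus (f t) h = c) ∨
  (∃ (f : Fin k → Fin n) (c : Fin r),
      StrictMono (fun t => S.sigma (f t)) ∧ StrictMono f ∧
      (∀ s t : Fin k, S.sigma (f s) < f t) ∧
      ∀ t, ∃ h : S.sigma (f t) < f t, S.cminus (f t) h = c)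

/-- `k`-nesting of a colored permutation. -/
def PermHasNesting {n r : ℕ} (S : ColoredPerm n r) (k : ℕ) : Prop :=
  (∃ (f : Fin k → Fin n) (c : Fin r),
      StrictMono f ∧ StrictAnti (fun t => S.sigma (f t)) ∧
      (∀ s t : Fin k, f s ≤ S.sigma (f t)) ∧
      ∀ t, ∃ h : f t ≤ S.sigma (f t), S.cplus (f t) h = c) ∨
  (∃ (f : Fin k → Fin n) (c : Fin r),
      StrictMono (fun t => S.sigma (f t)) ∧ StrictAnti f ∧
      (∀ s t : Fin k, S.sigma (f s) < f t) ∧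
      ∀ t, ∃ h : S.sigma (f t) < f t, S.cminus (f t) h = c)

/-- The number of partitions of `[n]` that are both noncrossing and nonnesting. -/
noncomputable def ncn22 (n : ℕ) : ℕ :=
  Nat.card {P : Finpartition (Finset.univ : Finset (Fin n)) //
    ¬HasCrossingP P 2 ∧ ¬HasNestingP P 2}

/-!
A partition of `[n]` is determined by its arcs, and conversely every set of rightward arcs with
distinct left ends and distinct right ends is the arc set of a partition, namely the one whose
blocks are the chains of arcs. The partition is noncrossing and nonnesting exactly when no arc
starts strictly inside another, i.e. when its arcs are intervals meeting at most in endpoints.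
Counting such arc sets `c n` according to the arc that ends at the last point gives
`c (n + 1) = c n + ∑ a < n, c (a + 1)`, hence `c (n + 2) = 3 c (n + 1) - c n`: the recurrence of
the odd-indexed Fibonacci numbers, and of the coefficients of `(1 - 2x) / (1 - 3x + x²)`.
-/

theorem Finpartition.ext_of_part_eq {α : Type*} [DecidableEq α] {s : Finset α}
    {P Q : Finpartition s} (h : ∀ a, P.part a = Q.part a) : P = Q := by
  ext t
  constructor
  · intro ht
    obtain ⟨a, ha, rfl⟩ := P.part_surjOn ht
    exact h a ▸ Q.part_mem.2 ha
  · intro ht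
    obtain ⟨a, ha, rfl⟩ := Q.part_surjOn ht
    exact (h a).symm ▸ P.part_mem.2 ha

namespace Relation

variable {α : Type*} {r : α → α → Prop}

/-- For a left and right unique relation, the `r`-paths through a point are totally ordered by
reachability, so "one is reachable from the other" is transitive. -/
def chainSetoid (hl : Relator.LeftUnique r) (hr : Relator.RightUnique r) : Setoid α where
  r a b := ReflTransGen r a b ∨ ReflTransGen r b a
  iseqv := by
    refine ⟨fun _ => Or.inl .refl, Or.symm, ?_⟩
    rintro a b c (hab | hba) (hbc | hcb)
    · exact Or.inl (hab.trans hbc)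
    · rw [← reflTransGen_swap] at hab hcb
      have hl' : Relator.RightUnique (Function.swap r) := hl.flip
      simpa only [reflTransGen_swap, or_comm] using hab.total_of_right_unique hl' hcb
    · exact hba.total_of_right_unique hr hbc
    · exact Or.inr (hcb.trans hba)

theorem ReflTransGen.le_of_imp_lt {β : Type*} [Preorder β] {r : β → β → Prop}
    (hlt : ∀ a b, r a b → a < b) {a b : β} (h : ReflTransGen r a b) : a ≤ b := by
  induction h with
  | refl => exact le_rfl
  | tail _ hbc ih => exact ih.trans (hlt _ _ hbc).le

end Relation

open Relation

section Arcs

variable {n : ℕ} {P Q : Finpartition (univ : Finset (Fin n))} {i j k : Fin n}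

theorem isArc_iff_mem_part :
    IsArc P i j ↔ i < j ∧ j ∈ P.part i ∧ ∀ k ∈ P.part i, i < k → j ≤ k := by
  refine and_congr_right fun _ => ⟨?_, fun h => ⟨_, P.part_mem.2 (mem_univ i),
    P.mem_part (mem_univ i), h⟩⟩
  rintro ⟨B, hB, hiB, hjB, hmin⟩
  rw [P.part_eq_of_mem hB hiB]
  exact ⟨hjB, hmin⟩

theorem IsArc.lt (h : IsArc P i j) : i < j := h.1

theorem IsArc.part_eq (h : IsArc P i j) : P.part j = P.part i :=
  P.part_eq_of_mem (P.part_mem.2 (mem_univ i)) (isArc_iff_mem_part.1 h).2.1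

theorem isArc_rightUnique : Relator.RightUnique (IsArc P) := by
  intro i j j' h h'
  rw [isArc_iff_mem_part] at h h'
  exact le_antisymm (h.2.2 j' h'.2.1 h'.1) (h'.2.2 j h.2.1 h.1)

theorem isArc_leftUnique : Relator.LeftUnique (IsArc P) := by
  intro i i' j h h'
  have hii' : P.part i' = P.part i := h'.part_eq.symm.trans h.part_eq
  have hmem : ∀ {a b : Fin n}, P.part a = P.part b → a ∈ P.part b :=
    ((P.mem_part_iff_part_eq_part (mem_univ _) (mem_univ _)).2 ·)
  rcases lt_trichotomy i i' with hlt | rfl | hlt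
  · exact absurd ((isArc_iff_mem_part.1 h).2.2 i' (hmem hii') hlt) h'.lt.not_ge
  · rfl
  · exact absurd ((isArc_iff_mem_part.1 h').2.2 i (hmem hii'.symm) hlt) h.lt.not_ge

/-- The arc leaving `i` goes to the next element of its block. -/
theorem exists_isArc_le_of_part_eq (hik : i < k) (h : P.part i = P.part k) :
    ∃ j, IsArc P i j ∧ j ≤ k := by
  have hk : k ∈ (P.part i).filter (i < ·) :=
    mem_filter.2 ⟨h ▸ P.mem_part (mem_univ k), hik⟩
  set j := ((P.part i).filter (i < ·)).min' ⟨k, hk⟩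
  have hj := mem_filter.1 (min'_mem _ ⟨k, hk⟩)
  refine ⟨j, isArc_iff_mem_part.2 ⟨hj.2, hj.1, fun k hk hik => ?_⟩, min'_le _ _ hk⟩
  exact min'_le _ _ (mem_filter.2 ⟨hk, hik⟩)

theorem reflTransGen_isArc_of_part_eq (hik : i ≤ k) (h : P.part i = P.part k) :
    ReflTransGen (IsArc P) i k := by
  induction hd : (k : ℕ) - i using Nat.strong_induction_on generalizing i with
  | _ d ih =>
    rcases hik.eq_or_lt with rfl | hik
    · exact .refl
    obtain ⟨j, hij, hjk⟩ := exists_isArc_le_of_part_eq hik h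
    have hij' : (i : ℕ) < j := hij.lt
    exact .head hij (ih _ (by omega) hjk (hij.part_eq.trans h) rfl)

theorem part_eq_of_reflTransGen (h : ReflTransGen (IsArc P) i k) : P.part i = P.part k := by
  induction h with
  | refl => rfl
  | tail _ hbc ih => exact ih.trans hbc.part_eq.symm

theorem part_eq_part_iff :
    P.part i = P.part k ↔ ReflTransGen (IsArc P) i k ∨ ReflTransGen (IsArc P) k i := by
  constructor
  · intro h
    rcases le_total i k with hik | hki
    · exact Or.inl (reflTransGen_isArc_of_part_eq hik h)
    · exact Or.inr (reflTransGen_isArc_of_part_eq hki h.symm)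
  · exact fun h => h.elim part_eq_of_reflTransGen fun h => (part_eq_of_reflTransGen h).symm

theorem Finpartition.eq_of_isArc_iff (h : ∀ i j, IsArc P i j ↔ IsArc Q i j) : P = Q := by
  have hPQ : IsArc P = IsArc Q := funext₂ fun i j => propext (h i j)
  refine Finpartition.ext_of_part_eq fun i => ?_
  ext k
  rw [P.mem_part_iff_part_eq_part (mem_univ _) (mem_univ _),
    Q.mem_part_iff_part_eq_part (mem_univ _) (mem_univ _), part_eq_part_iff, part_eq_part_iff, hPQ]

section OfArcs

variable {r : Fin n → Fin n → Prop} (hl : Relator.LeftUnique r) (hr : Relator.RightUnique r)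

noncomputable def Finpartition.ofArcs : Finpartition (univ : Finset (Fin n)) :=
  letI := Classical.decRel (chainSetoid hl hr)
  .ofSetoid (chainSetoid hl hr)

variable {hl hr}

theorem Finpartition.mem_part_ofArcs : k ∈ (ofArcs hl hr).part i ↔
    ReflTransGen r i k ∨ ReflTransGen r k i := by
  let := Classical.decRel (chainSetoid hl hr)
  exact mem_part_ofSetoid_iff_rel

theorem Finpartition.isArc_ofArcs (hlt : ∀ a b, r a b → a < b) :
    IsArc (ofArcs hl hr) i j ↔ r i j := by
  have hle : ∀ {a b}, ReflTransGen r a b → a ≤ b := ReflTransGen.le_of_imp_lt hlt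
  have first_step : ∀ {k}, (ReflTransGen r i k ∨ ReflTransGen r k i) → i < k →
      ∃ j, r i j ∧ ReflTransGen r j k := by
    rintro k (hik | hki) hlt'
    · exact (hik.cases_head).resolve_left hlt'.ne
    · exact absurd (hle hki) hlt'.not_ge
  simp only [isArc_iff_mem_part, mem_part_ofArcs]
  constructor
  · rintro ⟨hij, hchain, hmin⟩
    obtain ⟨j', hij', hj'j⟩ := first_step hchain hij
    obtain rfl : j' = j := le_antisymm (hle hj'j) (hmin j' (Or.inl (.single hij')) (hlt _ _ hij'))
    exact hij'
  · intro hij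
    refine ⟨hlt _ _ hij, Or.inl (.single hij), fun k hchain hik => ?_⟩
    obtain ⟨j', hij', hj'k⟩ := first_step hchain hik
    exact hr hij hij' ▸ hle hj'k

end OfArcs

end Arcs

section NoncrossingNonnesting

variable {n : ℕ} {P : Finpartition (univ : Finset (Fin n))}

theorem hasCrossingP_two_iff : HasCrossingP P 2 ↔
    ∃ i j k l, IsArc P i j ∧ IsArc P k l ∧ i < k ∧ k < j ∧ j < l := by
  constructor
  · rintro ⟨f, g, hf, hg, hfg, harc⟩
    exact ⟨f 0, g 0, f 1, g 1, harc 0, harc 1, hf Fin.zero_lt_one, hfg 1 0, hg Fin.zero_lt_one⟩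
  · rintro ⟨i, j, k, l, hij, hkl, hik, hkj, hjl⟩
    refine ⟨![i, k], ![j, l], ?_, ?_, ?_, ?_⟩
    · simpa [Fin.strictMono_iff_lt_succ] using hik
    · simpa [Fin.strictMono_iff_lt_succ] using hjl
    · simp [Fin.forall_fin_two, hij.lt, hkl.lt, hkj, hik.trans hkl.lt]
    · simp [Fin.forall_fin_two, hij, hkl]

theorem hasNestingP_two_iff : HasNestingP P 2 ↔
    ∃ i j k l, IsArc P i j ∧ IsArc P k l ∧ i < k ∧ l < j := by
  constructor
  · rintro ⟨f, g, hf, hg, hfg, harc⟩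
    exact ⟨f 0, g 0, f 1, g 1, harc 0, harc 1, hf Fin.zero_lt_one, hg Fin.zero_lt_one⟩
  · rintro ⟨i, j, k, l, hij, hkl, hik, hlj⟩
    refine ⟨![i, k], ![j, l], ?_, ?_, ?_, ?_⟩
    · simpa [Fin.strictMono_iff_lt_succ] using hik
    · simpa [Fin.strictAnti_iff_succ_lt] using hlj
    · simp [Fin.forall_fin_two, hij.lt, hkl.lt, hkl.lt.trans hlj, hik.trans hkl.lt]
    · simp [Fin.forall_fin_two, hij, hkl]

theorem noncrossing_and_nonnesting_iff : (¬HasCrossingP P 2 ∧ ¬HasNestingP P 2) ↔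
    ∀ i j k l, IsArc P i j → IsArc P k l → i < k → j ≤ k := by
  rw [hasCrossingP_two_iff, hasNestingP_two_iff]
  constructor
  · rintro ⟨hcr, hne⟩ i j k l hij hkl hik
    by_contra! hkj
    rcases lt_trichotomy j l with hjl | rfl | hlj
    · exact hcr ⟨i, j, k, l, hij, hkl, hik, hkj, hjl⟩
    · exact hik.ne (isArc_leftUnique hij hkl)
    · exact hne ⟨i, j, k, l, hij, hkl, hik, hlj⟩
  · intro h
    refine ⟨fun ⟨i, j, k, l, hij, hkl, hik, hkj, _⟩ => (h i j k l hij hkl hik).not_gt hkj,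
      fun ⟨i, j, k, l, hij, hkl, hik, hlj⟩ => ?_⟩
    exact (h i j k l hij hkl hik).not_gt (hkl.lt.trans hlj)

end NoncrossingNonnesting

section Counting

def IsNonoverlapping (S : Finset (ℕ × ℕ)) : Prop :=
  (∀ p ∈ S, p.1 < p.2) ∧ ∀ p ∈ S, ∀ q ∈ S, p ≠ q → p.2 ≤ q.1 ∨ q.2 ≤ p.1

instance : DecidablePred IsNonoverlapping := fun _ => by
  unfold IsNonoverlapping; infer_instance

def nonoverlappingArcSets (n : ℕ) : Finset (Finset (ℕ × ℕ)) :=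
  (range n ×ˢ range n).powerset.filter IsNonoverlapping

namespace IsNonoverlapping

variable {S T : Finset (ℕ × ℕ)} {p q : ℕ × ℕ}

theorem mono (hST : S ⊆ T) (hT : IsNonoverlapping T) : IsNonoverlapping S :=
  ⟨fun p hp => hT.1 p (hST hp), fun p hp q hq => hT.2 p (hST hp) q (hST hq)⟩

theorem eq_of_fst_eq (hS : IsNonoverlapping S) (hp : p ∈ S) (hq : q ∈ S) (h : p.1 = q.1) :
    p = q := by
  by_contra hpq
  have := hS.1 p hp
  have := hS.1 q hq
  rcases hS.2 p hp q hq hpq with h' | h' <;> omega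

theorem eq_of_snd_eq (hS : IsNonoverlapping S) (hp : p ∈ S) (hq : q ∈ S) (h : p.2 = q.2) :
    p = q := by
  by_contra hpq
  have := hS.1 p hp
  have := hS.1 q hq
  rcases hS.2 p hp q hq hpq with h' | h' <;> omega

theorem insert_of_forall_snd_le (hS : IsNonoverlapping S) {a b : ℕ} (hab : a < b)
    (ha : ∀ p ∈ S, p.2 ≤ a) : IsNonoverlapping (insert (a, b) S) := by
  refine ⟨by simpa [hab] using hS.1, ?_⟩
  simp only [mem_insert, forall_eq_or_imp, ne_eq, not_true_eq_false, false_imp_iff, true_and]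
  exact ⟨fun q hq _ => Or.inr (ha q hq), fun p hp => ⟨fun _ => Or.inl (ha p hp), hS.2 p hp⟩⟩

end IsNonoverlapping

theorem mem_nonoverlappingArcSets {n : ℕ} {S : Finset (ℕ × ℕ)} :
    S ∈ nonoverlappingArcSets n ↔ IsNonoverlapping S ∧ ∀ p ∈ S, p.2 < n := by
  simp only [nonoverlappingArcSets, mem_filter, mem_powerset]
  constructor
  · rintro ⟨hSn, hS⟩
    exact ⟨hS, fun p hp => (mem_range.1 (mem_product.1 (hSn hp)).2)⟩
  · rintro ⟨hS, hn⟩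
    refine ⟨fun p hp => mem_product.2 ⟨mem_range.2 ?_, mem_range.2 (hn p hp)⟩, hS⟩
    exact (hS.1 p hp).trans (hn p hp)

variable {n a : ℕ}

theorem filter_nonoverlappingArcSets_succ_forall_snd_ne :
    (nonoverlappingArcSets (n + 1)).filter (fun S => ∀ p ∈ S, p.2 ≠ n) =
      nonoverlappingArcSets n := by
  ext S
  simp only [mem_filter, mem_nonoverlappingArcSets]
  constructor
  · rintro ⟨⟨hS, hn⟩, hne⟩
    exact ⟨hS, fun p hp => lt_of_le_of_ne (Nat.lt_succ_iff.1 (hn p hp)) (hne p hp)⟩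
  · rintro ⟨hS, hn⟩
    exact ⟨⟨hS, fun p hp => (hn p hp).trans n.lt_succ_self⟩, fun p hp => (hn p hp).ne⟩

/-- Removing the arc `(a, n)` leaves a set of arcs inside `[0, a]`. -/
theorem card_filter_mem_nonoverlappingArcSets_succ (ha : a < n) :
    #((nonoverlappingArcSets (n + 1)).filter ((a, n) ∈ ·)) =
      #(nonoverlappingArcSets (a + 1)) := by
  refine card_nbij' (·.erase (a, n)) (insert (a, n)) ?_ ?_ ?_ ?_
  · intro S hS
    simp only [coe_filter, Set.mem_ofPred_eq, mem_nonoverlappingArcSets] at hS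
    obtain ⟨⟨hS, hn⟩, han⟩ := hS
    refine mem_nonoverlappingArcSets.2 ⟨hS.mono (erase_subset _ _), fun p hp => ?_⟩
    obtain ⟨hpa, hp⟩ := mem_erase.1 hp
    have := hS.1 p hp
    have := hn p hp
    rcases hS.2 p hp _ han hpa with h | h <;> simp only at h <;> omega
  · intro T hT
    obtain ⟨hT, ha'⟩ := mem_nonoverlappingArcSets.1 hT
    simp only [coe_filter, Set.mem_ofPred_eq, mem_nonoverlappingArcSets, mem_insert_self, and_true]
    refine ⟨hT.insert_of_forall_snd_le ha fun p hp => Nat.lt_succ_iff.1 (ha' p hp), ?_⟩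
    simp only [mem_insert, forall_eq_or_imp, n.lt_succ_self, true_and]
    exact fun p hp => (ha' p hp).trans (by omega)
  · intro S hS
    exact insert_erase (mem_filter.1 hS).2
  · intro T hT
    refine erase_insert fun h => ?_
    have := (mem_nonoverlappingArcSets.1 hT).2 _ h
    simp only at this
    omega

theorem filter_nonoverlappingArcSets_succ_exists_snd_eq :
    (nonoverlappingArcSets (n + 1)).filter (fun S => ¬∀ p ∈ S, p.2 ≠ n) =
      (range n).biUnion fun a => (nonoverlappingArcSets (n + 1)).filter ((a, n) ∈ ·) := by
  ext S
  simp only [mem_filter, mem_biUnion, mem_range, not_forall, not_not, exists_prop]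
  constructor
  · rintro ⟨hS, ⟨a, b⟩, hab, rfl⟩
    exact ⟨a, (mem_nonoverlappingArcSets.1 hS).1.1 _ hab, hS, hab⟩
  · rintro ⟨a, -, hS, han⟩
    exact ⟨hS, _, han, rfl⟩

theorem card_nonoverlappingArcSets_succ :
    #(nonoverlappingArcSets (n + 1)) =
      #(nonoverlappingArcSets n) + ∑ a ∈ range n, #(nonoverlappingArcSets (a + 1)) := by
  rw [← card_filter_add_card_filter_not (fun S => ∀ p ∈ S, p.2 ≠ n),
    filter_nonoverlappingArcSets_succ_forall_snd_ne,
    filter_nonoverlappingArcSets_succ_exists_snd_eq, card_biUnion]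
  · exact congrArg _ (sum_congr rfl fun a ha =>
      card_filter_mem_nonoverlappingArcSets_succ (mem_range.1 ha))
  · intro a _ a' _ haa'
    refine disjoint_left.2 fun S hSa hSa' => haa' ?_
    obtain ⟨hS, han⟩ := mem_filter.1 hSa
    exact congrArg Prod.fst ((mem_nonoverlappingArcSets.1 hS).1.eq_of_snd_eq han
      (mem_filter.1 hSa').2 rfl)

theorem card_nonoverlappingArcSets_zero : #(nonoverlappingArcSets 0) = 1 := by
  decide

theorem card_nonoverlappingArcSets_add_two :
    #(nonoverlappingArcSets (n + 2)) + #(nonoverlappingArcSets n) =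
      3 * #(nonoverlappingArcSets (n + 1)) := by
  have h₁ : #(nonoverlappingArcSets (n + 2)) = #(nonoverlappingArcSets (n + 1)) +
      ∑ a ∈ range n, #(nonoverlappingArcSets (a + 1)) + #(nonoverlappingArcSets (n + 1)) := by
    rw [card_nonoverlappingArcSets_succ, sum_range_succ, add_assoc]
  have h₀ := card_nonoverlappingArcSets_succ (n := n)
  omega

end Counting

section ArcSet

variable {n : ℕ} {P : Finpartition (univ : Finset (Fin n))} {i j : Fin n}

open Classical in
/-- Arcs are recorded in `ℕ × ℕ`, so that arc sets of `[n]` and of `[a + 1]` can be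
compared. -/
noncomputable def arcSet (P : Finpartition (univ : Finset (Fin n))) : Finset (ℕ × ℕ) :=
  (univ.filter fun p : Fin n × Fin n => IsArc P p.1 p.2).image fun p => ((p.1 : ℕ), (p.2 : ℕ))

theorem mem_arcSet {p : ℕ × ℕ} :
    p ∈ arcSet P ↔ ∃ i j, IsArc P i j ∧ ((i : ℕ), (j : ℕ)) = p := by
  simp [arcSet]

theorem coe_mem_arcSet : ((i : ℕ), (j : ℕ)) ∈ arcSet P ↔ IsArc P i j := by
  simp [mem_arcSet, Fin.val_inj]

theorem arcSet_injective : Function.Injective (arcSet (n := n)) := fun P Q h =>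
  Finpartition.eq_of_isArc_iff fun i j => by rw [← coe_mem_arcSet, h, coe_mem_arcSet]

theorem isNonoverlapping_arcSet_iff : IsNonoverlapping (arcSet P) ↔
    ∀ i j k l, IsArc P i j → IsArc P k l → i < k → j ≤ k := by
  simp only [IsNonoverlapping, mem_arcSet, forall_exists_index, and_imp]
  constructor
  · rintro ⟨-, h⟩ i j k l hij hkl hik
    have hkl' := hkl.lt
    rcases h _ i j hij rfl _ k l hkl rfl (by simp [Fin.val_inj, hik.ne]) with h | h
    · exact h
    · simp only at h; omega
  · intro h
    refine ⟨fun _ i j hij hp => hp ▸ hij.lt, ?_⟩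
    rintro _ i j hij rfl _ k l hkl rfl hne
    rcases lt_trichotomy i k with hik | rfl | hki
    · exact Or.inl (h i j k l hij hkl hik)
    · exact absurd (by rw [isArc_rightUnique hij hkl]) hne
    · exact Or.inr (h k l i j hkl hij hki)

theorem arcSet_mem_nonoverlappingArcSets_iff :
    arcSet P ∈ nonoverlappingArcSets n ↔ ¬HasCrossingP P 2 ∧ ¬HasNestingP P 2 := by
  rw [noncrossing_and_nonnesting_iff, ← isNonoverlapping_arcSet_iff, mem_nonoverlappingArcSets,
    and_iff_left_iff_imp]
  intro _ p hp
  obtain ⟨i, j, -, rfl⟩ := mem_arcSet.1 hp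
  exact j.isLt

theorem exists_arcSet_eq {S : Finset (ℕ × ℕ)} (hS : S ∈ nonoverlappingArcSets n) :
    ∃ P : Finpartition (univ : Finset (Fin n)), arcSet P = S := by
  obtain ⟨hS, hn⟩ := mem_nonoverlappingArcSets.1 hS
  let r : Fin n → Fin n → Prop := fun i j => ((i : ℕ), (j : ℕ)) ∈ S
  have hl : Relator.LeftUnique r := fun i i' j h h' =>
    Fin.ext (congrArg Prod.fst (hS.eq_of_snd_eq h h' rfl))
  have hr : Relator.RightUnique r := fun i j j' h h' =>
    Fin.ext (congrArg Prod.snd (hS.eq_of_fst_eq h h' rfl))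
  refine ⟨.ofArcs hl hr, Finset.ext fun p => ?_⟩
  have hlt : ∀ i j, r i j → i < j := fun i j h => Fin.lt_def.2 (hS.1 ((i : ℕ), (j : ℕ)) h)
  simp only [mem_arcSet, Finpartition.isArc_ofArcs hlt]
  refine ⟨fun ⟨i, j, h, hp⟩ => hp ▸ h, fun hp => ?_⟩
  have := hS.1 p hp
  exact ⟨⟨p.1, by have := hn p hp; omega⟩, ⟨p.2, hn p hp⟩, hp, rfl⟩

theorem ncn22_eq_card (n : ℕ) : ncn22 n = #(nonoverlappingArcSets n) := by
  rw [ncn22, ← Nat.card_eq_finsetCard]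
  refine Nat.card_eq_of_bijective
    (fun P => ⟨arcSet P.1, arcSet_mem_nonoverlappingArcSets_iff.2 P.2⟩) ⟨?_, ?_⟩
  · exact fun P Q h => Subtype.ext (arcSet_injective (congrArg Subtype.val h))
  · rintro ⟨S, hS⟩
    obtain ⟨P, rfl⟩ := exists_arcSet_eq hS
    exact ⟨⟨P, arcSet_mem_nonoverlappingArcSets_iff.1 hS⟩, rfl⟩

end ArcSet

theorem eq_fib_two_mul_add_one_of_recurrence {u : ℕ → ℕ} (h₀ : u 0 = 1) (h₁ : u 1 = 1)
    (h : ∀ n, u (n + 2) + u n = 3 * u (n + 1)) (n : ℕ) : u (n + 1) = Nat.fib (2 * n + 1) := by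
  suffices u (n + 1) = Nat.fib (2 * n + 1) ∧ u (n + 2) = Nat.fib (2 * n + 3) from this.1
  induction n with
  | zero =>
    have h₂ : u 2 + u 0 = 3 * u 1 := h 0
    refine ⟨h₁, ?_⟩
    rw [show u 2 = 2 by omega]
    rfl
  | succ n ih =>
    have f₁ : Nat.fib (2 * n + 3) = Nat.fib (2 * n + 1) + Nat.fib (2 * n + 2) := Nat.fib_add_two
    have f₂ : Nat.fib (2 * n + 4) = Nat.fib (2 * n + 2) + Nat.fib (2 * n + 3) := Nat.fib_add_two
    have f₃ : Nat.fib (2 * n + 5) = Nat.fib (2 * n + 3) + Nat.fib (2 * n + 4) := Nat.fib_add_two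
    have hn : u (n + 3) + u (n + 1) = 3 * u (n + 2) := h (n + 1)
    refine ⟨ih.2, ?_⟩
    show u (n + 3) = Nat.fib (2 * n + 5)
    omega

open PowerSeries in
theorem PowerSeries.mk_mul_eq_of_recurrence {R : Type*} [CommRing R] {a : ℕ → R} {p q : R}
    (h : ∀ n, a (n + 2) = p * a (n + 1) - q * a n) :
    mk a * (1 - C p * X + C q * X ^ 2) = C (a 0) + C (a 1 - p * a 0) * X := by
  ext k
  rw [show mk a * (1 - C p * X + C q * X ^ 2) = mk a - C p * (mk a * X) + C q * (mk a * X ^ 2) by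
    ring]
  simp only [map_add, map_sub, coeff_C_mul, coeff_mul_X_pow', coeff_C, coeff_mk]
  rcases k with _ | _ | k
  · simp
  · simp [coeff_succ_mul_X]
  · simp [coeff_succ_mul_X, h]

/-- `NCN_{2,2}(n,1) = f_{2n−1}` and
`Σ NCN_{2,2}(n,1) xⁿ = (1 − 2x)/(1 − 3x + x²)`. -/
theorem stmt11 :
    (∀ n : ℕ, 1 ≤ n → ncn22 n = Nat.fib (2 * n - 1)) ∧
    (PowerSeries.mk fun n => (ncn22 n : ℚ)) *
        (1 - 3 * PowerSeries.X + PowerSeries.X ^ 2) =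
      1 - 2 * PowerSeries.X := by
  have h₀ : ncn22 0 = 1 := by rw [ncn22_eq_card, card_nonoverlappingArcSets_zero]
  have h₁ : ncn22 1 = 1 := by
    rw [ncn22_eq_card, card_nonoverlappingArcSets_succ, sum_range_zero,
      card_nonoverlappingArcSets_zero, add_zero]
  have hrec : ∀ n, ncn22 (n + 2) + ncn22 n = 3 * ncn22 (n + 1) := fun n => by
    simp only [ncn22_eq_card, card_nonoverlappingArcSets_add_two]
  refine ⟨fun n hn => ?_, ?_⟩
  · obtain ⟨m, rfl⟩ : ∃ m, n = m + 1 := ⟨n - 1, by omega⟩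
    rw [show 2 * (m + 1) - 1 = 2 * m + 1 by omega]
    exact eq_fib_two_mul_add_one_of_recurrence h₀ h₁ hrec m
  · have hrecℚ : ∀ n, (ncn22 (n + 2) : ℚ) = 3 * ncn22 (n + 1) - 1 * ncn22 n := fun n => by
      rw [eq_sub_iff_add_eq, one_mul]; exact_mod_cast hrec n
    have hC : (1 - 3 * PowerSeries.X + PowerSeries.X ^ 2 : PowerSeries ℚ) =
        1 - PowerSeries.C 3 * PowerSeries.X + PowerSeries.C 1 * PowerSeries.X ^ 2 := by
      simp [map_ofNat]
    rw [hC, PowerSeries.mk_mul_eq_of_recurrence hrecℚ, h₀, h₁]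
    norm_num [map_ofNat, ← sub_eq_add_neg]
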